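/- Under the same two-route setup (Λ_i continuous, non-decreasing, concave, Λ_i(0) = 0; p_i ∈ [p_min, p_max] with 0 < p_min ≤ p_max), let x* maximize rider welfare R(x) = Λ_1(x_1) + Λ_2(x_2) over the unit simplex, with per-driver profits π_1(x_1*) ≥ π_2(x_2*). Let x̃ satisfy x̃_1 ≥ x_1*, x̃_2 ≥ min(α, x_2*), x̃_1 + x̃_2 = 1, and π_1(x̃_1) ≥ π_2(x̃_2). Then R(x*) ≤ (1 + (p_max/p_min)·(1 − α)) · R(x̃). -/

import Mathlib

/-!
If `x̃₂ ≥ x₂*`, monotonicity alone gives `R(x*) ≤ R(x̃)`. Otherwise `x̃₂ ≥ α`, and concavity with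
`Λ₂(0) = 0` bounds `Λ₂(x₂*)` by `x₂* · s`, where `s` is the average rate `Λ₂(x̃₂)/x̃₂` (the right
derivative at `0` if `x̃₂ = 0`); so route 2 loses at most `(x₂* - x̃₂) s ≤ (1 - α) s`. The profit
ordering `π₂(x̃₂) ≤ π₁(x̃₁)` gives `p_min s ≤ p_max Λ₁(x̃₁)/x̃₁`, and averaging with the weights
`x̃₁, x̃₂` yields `p_min s ≤ p_max R(x̃)`.
-/

open Set

/-- `Λ x / x`, extended to `x = 0` by the right derivative `d`; the per-driver profit of a route
with price `p` is `p * avgRate Λ d x`. -/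
noncomputable def avgRate (Λ : ℝ → ℝ) (d x : ℝ) : ℝ := if 0 < x then Λ x / x else d

section avgRate

variable {Λ : ℝ → ℝ} {d x : ℝ}

lemma mul_avgRate_eq_ite (p : ℝ) :
    p * avgRate Λ d x = if 0 < x then p * Λ x / x else p * d := by
  unfold avgRate
  split_ifs <;> ring

lemma self_mul_avgRate (h0 : Λ 0 = 0) (hx : 0 ≤ x) : x * avgRate Λ d x = Λ x := by
  rcases hx.eq_or_lt with rfl | hx
  · simp [h0]
  · rw [avgRate, if_pos hx, mul_div_cancel₀ _ hx.ne']

lemma slope_zero_eq_div (h0 : Λ 0 = 0) : slope Λ 0 x = Λ x / x := by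
  simp [slope_def_field, h0]

lemma avgRate_nonneg (hmono : MonotoneOn Λ (Ici 0)) (h0 : Λ 0 = 0)
    (hd : HasDerivWithinAt Λ d (Ici 0) 0) (hx : 0 ≤ x) : 0 ≤ avgRate Λ d x := by
  unfold avgRate
  split_ifs with hpos
  · exact div_nonneg (h0 ▸ hmono self_mem_Ici hx hx) hx
  · refine hd.nonneg_of_monotoneOn ?_ hmono
    rw [accPt_principal_iff_nhdsWithin, Ici_sdiff_left]
    infer_instance

lemma ConcaveOn.slope_zero_le_avgRate (hconc : ConcaveOn ℝ (Ici 0) Λ) (h0 : Λ 0 = 0)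
    (hd : HasDerivWithinAt Λ d (Ici 0) 0) {t u : ℝ} (ht : 0 ≤ t) (htu : t < u) :
    slope Λ 0 u ≤ avgRate Λ d t := by
  have hu : (0 : ℝ) ≤ u := ht.trans htu.le
  rcases ht.eq_or_lt with rfl | ht
  · simpa [avgRate] using hconc.slope_le_of_hasDerivWithinAt self_mem_Ici hu htu hd
  · rw [avgRate, if_pos ht, ← slope_zero_eq_div h0]
    exact hconc.slope_anti self_mem_Ici ⟨ht.le, ht.ne'⟩ ⟨hu, (ht.trans htu).ne'⟩ htu.le

lemma ConcaveOn.le_mul_avgRate (hconc : ConcaveOn ℝ (Ici 0) Λ) (h0 : Λ 0 = 0)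
    (hd : HasDerivWithinAt Λ d (Ici 0) 0) {t u : ℝ} (ht : 0 ≤ t) (htu : t ≤ u) :
    Λ u ≤ u * avgRate Λ d t := by
  rcases htu.eq_or_lt with rfl | htu
  · exact (self_mul_avgRate h0 ht).ge
  · have hu : 0 < u := ht.trans_lt htu
    calc Λ u = u * slope Λ 0 u := by rw [slope_zero_eq_div h0, mul_div_cancel₀ _ hu.ne']
      _ ≤ u * avgRate Λ d t :=
        mul_le_mul_of_nonneg_left (hconc.slope_zero_le_avgRate h0 hd ht htu) hu.le

lemma ConcaveOn.le_add_one_sub_mul_avgRate (hconc : ConcaveOn ℝ (Ici 0) Λ)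
    (hmono : MonotoneOn Λ (Ici 0)) (h0 : Λ 0 = 0) (hd : HasDerivWithinAt Λ d (Ici 0) 0)
    {α y : ℝ} (hα : α ≤ 1) (hx : 0 ≤ x) (hx1 : x ≤ 1) (hy : 0 ≤ y) (hmin : min α x ≤ y) :
    Λ x ≤ Λ y + (1 - α) * avgRate Λ d y := by
  have hs : 0 ≤ avgRate Λ d y := avgRate_nonneg hmono h0 hd hy
  rcases le_or_gt x y with hxy | hyx
  · linarith [hmono hx hy hxy, mul_nonneg (sub_nonneg.2 hα) hs]
  · have hαy : α ≤ y := (min_le_iff.1 hmin).resolve_right hyx.not_ge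
    calc Λ x ≤ x * avgRate Λ d y := hconc.le_mul_avgRate h0 hd hy hyx.le
      _ = Λ y + (x - y) * avgRate Λ d y := by rw [← self_mul_avgRate h0 hy]; ring
      _ ≤ Λ y + (1 - α) * avgRate Λ d y := by gcongr

end avgRate

lemma mul_avgRate_le_of_profit_le {Λ₁ Λ₂ : ℝ → ℝ} {d₁ d₂ p₁ p₂ pmin pmax x₁ x₂ : ℝ}
    (hmono₁ : MonotoneOn Λ₁ (Ici 0)) (hmono₂ : MonotoneOn Λ₂ (Ici 0)) (h₀₁ : Λ₁ 0 = 0)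
    (h₀₂ : Λ₂ 0 = 0) (hd₂ : HasDerivWithinAt Λ₂ d₂ (Ici 0) 0) (hpminmax : pmin ≤ pmax)
    (hp₁ : p₁ ≤ pmax) (hp₂ : pmin ≤ p₂) (hx₁ : 0 ≤ x₁) (hx₂ : 0 ≤ x₂) (hsum : x₁ + x₂ = 1)
    (hprofit : p₂ * avgRate Λ₂ d₂ x₂ ≤ p₁ * avgRate Λ₁ d₁ x₁) :
    pmin * avgRate Λ₂ d₂ x₂ ≤ pmax * (Λ₁ x₁ + Λ₂ x₂) := by
  set s := avgRate Λ₂ d₂ x₂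
  have hs : 0 ≤ s := avgRate_nonneg hmono₂ h₀₂ hd₂ hx₂
  have hΛ₁ : 0 ≤ Λ₁ x₁ := h₀₁ ▸ hmono₁ self_mem_Ici hx₁ hx₁
  calc pmin * s = x₁ * (pmin * s) + x₂ * (pmin * s) := by linear_combination -(pmin * s) * hsum
    _ ≤ x₁ * (p₁ * avgRate Λ₁ d₁ x₁) + x₂ * (pmax * s) := by
      gcongr x₁ * ?_ + x₂ * ?_
      · exact (mul_le_mul_of_nonneg_right hp₂ hs).trans hprofit
      · gcongr
    _ = p₁ * Λ₁ x₁ + pmax * Λ₂ x₂ := by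
      rw [← self_mul_avgRate h₀₁ hx₁, ← self_mul_avgRate h₀₂ hx₂]; ring
    _ ≤ pmax * (Λ₁ x₁ + Λ₂ x₂) := by rw [mul_add]; gcongr

theorem lpf_rider_welfare_ratio_two_routes_general
    (Λ1 Λ2 : ℝ → ℝ) (p1 p2 d1 d2 α pmin pmax : ℝ)
    (hpmin : 0 < pmin) (hpminmax : pmin ≤ pmax)
    (hp1u : p1 ≤ pmax)
    (hp2l : pmin ≤ p2)
    (hmono1 : MonotoneOn Λ1 (Set.Ici 0)) (hmono2 : MonotoneOn Λ2 (Set.Ici 0))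
    (hconc2 : ConcaveOn ℝ (Set.Ici 0) Λ2)
    (h01 : Λ1 0 = 0) (h02 : Λ2 0 = 0)
    (hd2 : HasDerivWithinAt Λ2 d2 (Set.Ici 0) 0)
    (π1 π2 : ℝ → ℝ)
    (hπ1 : ∀ x, π1 x = if 0 < x then p1 * Λ1 x / x else p1 * d1)
    (hπ2 : ∀ x, π2 x = if 0 < x then p2 * Λ2 x / x else p2 * d2)
    (hα : α ∈ Set.Icc (0 : ℝ) 1)
    (x1s x2s : ℝ) (hx1s : 0 ≤ x1s) (hx2s : 0 ≤ x2s) (hsums : x1s + x2s = 1)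
    (xt1 xt2 : ℝ) (hxt1 : 0 ≤ xt1) (hxt2 : 0 ≤ xt2)
    (hsumt : xt1 + xt2 = 1)
    (hxt2lb : min α x2s ≤ xt2)
    (hxt1lb : x1s ≤ xt1)
    (hordt : π2 xt2 ≤ π1 xt1) :
    Λ1 x1s + Λ2 x2s ≤ (1 + pmax / pmin * (1 - α)) * (Λ1 xt1 + Λ2 xt2) := by
  have hprofit : p2 * avgRate Λ2 d2 xt2 ≤ p1 * avgRate Λ1 d1 xt1 := by
    rwa [hπ1, hπ2, ← mul_avgRate_eq_ite, ← mul_avgRate_eq_ite] at hordt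
  have hrate := mul_avgRate_le_of_profit_le hmono1 hmono2 h01 h02 hd2 hpminmax hp1u hp2l
    hxt1 hxt2 hsumt hprofit
  have hloss := hconc2.le_add_one_sub_mul_avgRate hmono2 h02 hd2 hα.2 hx2s (by linarith) hxt2
    hxt2lb
  have hgain : Λ1 x1s ≤ Λ1 xt1 := hmono1 hx1s hxt1 hxt1lb
  have h1α : 0 ≤ 1 - α := sub_nonneg.2 hα.2
  rw [show 1 + pmax / pmin * (1 - α) = (pmin + pmax * (1 - α)) / pmin by field_simp,
    div_mul_eq_mul_div, le_div_iff₀' hpmin]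
  calc pmin * (Λ1 x1s + Λ2 x2s)
      ≤ pmin * (Λ1 xt1 + (Λ2 xt2 + (1 - α) * avgRate Λ2 d2 xt2)) := by gcongr
    _ = pmin * (Λ1 xt1 + Λ2 xt2) + (1 - α) * (pmin * avgRate Λ2 d2 xt2) := by ring
    _ ≤ pmin * (Λ1 xt1 + Λ2 xt2) + (1 - α) * (pmax * (Λ1 xt1 + Λ2 xt2)) := by gcongr
    _ = (pmin + pmax * (1 - α)) * (Λ1 xt1 + Λ2 xt2) := by ring

/-- Rider-welfare ratio bound for the LPF-R Stackelberg strategy with two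
routes: `R(x*) ≤ (1 + (pmax/pmin) (1 − α)) R(x̃)`. -/
theorem lpf_rider_welfare_ratio_two_routes
    (Λ1 Λ2 : ℝ → ℝ) (p1 p2 d1 d2 α pmin pmax : ℝ)
    (hpmin : 0 < pmin) (hpminmax : pmin ≤ pmax)
    (hp1l : pmin ≤ p1) (hp1u : p1 ≤ pmax)
    (hp2l : pmin ≤ p2) (hp2u : p2 ≤ pmax)
    (hcont1 : ContinuousOn Λ1 (Set.Ici 0)) (hcont2 : ContinuousOn Λ2 (Set.Ici 0))
    (hmono1 : MonotoneOn Λ1 (Set.Ici 0)) (hmono2 : MonotoneOn Λ2 (Set.Ici 0))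
    (hconc1 : ConcaveOn ℝ (Set.Ici 0) Λ1) (hconc2 : ConcaveOn ℝ (Set.Ici 0) Λ2)
    (h01 : Λ1 0 = 0) (h02 : Λ2 0 = 0)
    (hnn1 : ∀ x, 0 ≤ x → 0 ≤ Λ1 x) (hnn2 : ∀ x, 0 ≤ x → 0 ≤ Λ2 x)
    (hd1 : HasDerivWithinAt Λ1 d1 (Set.Ici 0) 0)
    (hd2 : HasDerivWithinAt Λ2 d2 (Set.Ici 0) 0)
    (π1 π2 : ℝ → ℝ)
    (hπ1 : ∀ x, π1 x = if 0 < x then p1 * Λ1 x / x else p1 * d1)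
    (hπ2 : ∀ x, π2 x = if 0 < x then p2 * Λ2 x / x else p2 * d2)
    (hα : α ∈ Set.Icc (0 : ℝ) 1)
    (x1s x2s : ℝ) (hx1s : 0 ≤ x1s) (hx2s : 0 ≤ x2s) (hsums : x1s + x2s = 1)
    -- x* maximizes rider welfare over the unit simplex
    (hopt : ∀ y1 y2 : ℝ, 0 ≤ y1 → 0 ≤ y2 → y1 + y2 = 1 →
      Λ1 y1 + Λ2 y2 ≤ Λ1 x1s + Λ2 x2s)
    (hord : π2 x2s ≤ π1 x1s)
    (xt1 xt2 : ℝ) (hxt1 : 0 ≤ xt1) (hxt2 : 0 ≤ xt2)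
    (hsumt : xt1 + xt2 = 1)
    (hxt2lb : min α x2s ≤ xt2)
    (hxt1lb : x1s ≤ xt1)
    (hordt : π2 xt2 ≤ π1 xt1) :
    Λ1 x1s + Λ2 x2s ≤ (1 + pmax / pmin * (1 - α)) * (Λ1 xt1 + Λ2 xt2) :=
  lpf_rider_welfare_ratio_two_routes_general Λ1 Λ2 p1 p2 d1 d2 α pmin pmax hpmin hpminmax hp1u hp2l
    hmono1 hmono2 hconc2 h01 h02 hd2 π1 π2 hπ1 hπ2 hα x1s x2s hx1s hx2s hsums xt1 xt2 hxt1 hxt2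
    hsumt hxt2lb hxt1lb hordt
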